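/- arXiv:2101.07819 — 4 statements merged into one kernel-verified Lean document; each statement's English description precedes it below -/
import Mathlib

section
/- As a commutative monoid under addition, a Weil-algebra A = ℕ[x₁,…,xₙ]/(xᵢxⱼ : i ∼ j) is free on the set of its nonzero monomials, i.e. on the square-free monomials x_{i₁}⋯x_{i_k} (including the empty monomial 1) such that no two indices i_p, i_q with p ≠ q satisfy i_p ∼ i_q; every element of A is a unique ℕ-linear combination of these monomials. -/
open MvPolynomial

/-- A presentation of a Weil-algebra: a finite set of generators together with a
reflexive symmetric relation `sim`; the algebra is `ℕ[xᵢ]/(xᵢxⱼ : sim i j)`. -/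
structure WeilPres where
  ι : Type
  fintypeI : Fintype ι
  sim : ι → ι → Prop
  refl : ∀ i, sim i i
  symm : ∀ i j, sim i j → sim j i

attribute [instance] WeilPres.fintypeI

/-- The underlying commutative semiring `ℕ[x₁,…,xₙ]/(xᵢxⱼ : i ∼ j)` of a Weil presentation. -/
def WeilPres.Carrier (P : WeilPres) : Type :=
  (ringConGen fun p q : MvPolynomial P.ι ℕ =>
    ∃ i j, P.sim i j ∧ p = X i * X j ∧ q = 0).Quotient

noncomputable instance (P : WeilPres) : CommSemiring P.Carrier :=
  inferInstanceAs (CommSemiring (RingCon.Quotient _))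

/-- The generator `xᵢ` of the Weil-algebra presented by `P`. -/
noncomputable def WeilPres.gen (P : WeilPres) (i : P.ι) : P.Carrier :=
  RingCon.mk' _ (X i)

/-!
Call an exponent reduced if it is divisible by no relator `xᵢxⱼ` with `i ∼ j`; the reduced
exponents form a lower set, and they are exactly the exponents of the square-free monomials on
independent sets of generators. Because a lower set contains every factor of its members,
agreement of coefficients at reduced exponents is a congruence of semirings which contains the
relations, so these coefficients descend to the Weil-algebra, giving uniqueness. A monomial with
a non-reduced exponent is a multiple of a relator and vanishes, giving existence.
-/

namespace MvPolynomial

variable {σ R : Type*} [CommSemiring R]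

noncomputable def coeffCon (D : LowerSet (σ →₀ ℕ)) : RingCon (MvPolynomial σ R) where
  r p q := ∀ d ∈ D, coeff d p = coeff d q
  iseqv := ⟨fun _ _ _ => rfl, fun h d hd => (h d hd).symm,
    fun h h' d hd => (h d hd).trans (h' d hd)⟩
  add' h h' d hd := by simp only [coeff_add, h d hd, h' d hd]
  mul' h h' d hd := by
    classical
    simp only [coeff_mul]
    refine Finset.sum_congr rfl fun x hx => ?_
    rw [Finset.HasAntidiagonal.mem_antidiagonal] at hx
    rw [h x.1 (D.lower (hx ▸ le_self_add) hd), h' x.2 (D.lower (hx ▸ le_add_self) hd)]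

end MvPolynomial

namespace Finset

variable {ι : Type*}

noncomputable def exponent (s : Finset ι) : ι →₀ ℕ := ∑ i ∈ s, Finsupp.single i 1

theorem exponent_apply [DecidableEq ι] (s : Finset ι) (i : ι) :
    s.exponent i = if i ∈ s then 1 else 0 := by
  simp [exponent, Finset.sum_apply', Finsupp.single_apply]

theorem support_exponent (s : Finset ι) : s.exponent.support = s := by
  classical
  ext i
  simp [exponent_apply]

theorem exponent_injective : Function.Injective (exponent : Finset ι → ι →₀ ℕ) :=
  fun s t h => by rw [← support_exponent s, ← support_exponent t, h]

theorem single_add_single_le_exponent_iff [DecidableEq ι] {s : Finset ι} {i j : ι} :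
    Finsupp.single i 1 + Finsupp.single j 1 ≤ s.exponent ↔ i ≠ j ∧ i ∈ s ∧ j ∈ s := by
  constructor
  · intro h
    have hi : 1 ≤ s.exponent i := le_trans (by simp) (h i)
    have hj : 1 ≤ s.exponent j := le_trans (by simp) (h j)
    refine ⟨?_, ?_, ?_⟩
    · rintro rfl
      rw [← Finsupp.single_add, Finsupp.single_le_iff, exponent_apply] at h
      split_ifs at h <;> omega
    · by_contra hs
      simp [exponent_apply, hs] at hi
    · by_contra hs
      simp [exponent_apply, hs] at hj
  · rintro ⟨hij, hi, hj⟩ k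
    simp only [Finsupp.add_apply, Finsupp.single_apply, exponent_apply]
    split_ifs <;> simp_all

theorem prod_X_eq_monomial_exponent {R : Type*} [CommSemiring R] (s : Finset ι) :
    ∏ i ∈ s, (X i : MvPolynomial ι R) = monomial s.exponent 1 :=
  (monomial_sum_one s _).symm

end Finset

namespace WeilPres

variable (P : WeilPres)

def IsIndependent (s : Finset P.ι) : Prop := ∀ i ∈ s, ∀ j ∈ s, i ≠ j → ¬ P.sim i j

def reducedExponents : LowerSet (P.ι →₀ ℕ) where
  carrier := {u | ∀ i j, P.sim i j → ¬ Finsupp.single i 1 + Finsupp.single j 1 ≤ u}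
  lower' _ _ hba ha i j hij hle := ha i j hij (hle.trans hba)

theorem mem_reducedExponents {u : P.ι →₀ ℕ} : u ∈ P.reducedExponents ↔
    ∀ i j, P.sim i j → ¬ Finsupp.single i 1 + Finsupp.single j 1 ≤ u :=
  Iff.rfl

theorem exponent_mem_reducedExponents_iff (s : Finset P.ι) :
    s.exponent ∈ P.reducedExponents ↔ P.IsIndependent s := by
  classical
  simp only [mem_reducedExponents, Finset.single_add_single_le_exponent_iff, IsIndependent]
  exact ⟨fun h i hi j hj hij hsim => h i j hsim ⟨hij, hi, hj⟩,
    fun h i j hsim ⟨hij, hi, hj⟩ => h i hi j hj hij hsim⟩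

theorem exists_exponent_eq_of_mem_reducedExponents {u : P.ι →₀ ℕ}
    (hu : u ∈ P.reducedExponents) : ∃ s : Finset P.ι, s.exponent = u := by
  classical
  have hle (i : P.ι) : u i ≤ 1 := by
    by_contra! h
    refine hu i i (P.refl i) ?_
    rw [← Finsupp.single_add, Finsupp.single_le_iff]
    exact h
  refine ⟨u.support, Finsupp.ext fun i => ?_⟩
  simp only [Finset.exponent_apply, Finsupp.mem_support_iff]
  have := hle i
  split_ifs <;> omega

noncomputable def con : RingCon (MvPolynomial P.ι ℕ) :=
  ringConGen fun p q => ∃ i j, P.sim i j ∧ p = X i * X j ∧ q = 0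

noncomputable def ofPoly : MvPolynomial P.ι ℕ →+* P.Carrier := P.con.mk'

theorem ofPoly_surjective : Function.Surjective P.ofPoly := P.con.mk'_surjective

theorem con_le_coeffCon : P.con ≤ coeffCon P.reducedExponents := by
  classical
  refine RingCon.ringConGen_le.mpr ?_
  rintro _ _ ⟨i, j, hij, rfl, rfl⟩ d hd
  rw [X, X, monomial_mul, one_mul, coeff_monomial, if_neg, coeff_zero]
  rintro rfl
  exact hd i j hij le_rfl

theorem ofPoly_X_mul_X {i j : P.ι} (h : P.sim i j) : P.ofPoly (X i * X j) = 0 :=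
  (RingCon.eq _).mpr (RingConGen.Rel.of _ _ ⟨i, j, h, rfl, rfl⟩)

theorem ofPoly_monomial_of_notMem {u : P.ι →₀ ℕ} (hu : u ∉ P.reducedExponents) (a : ℕ) :
    P.ofPoly (monomial u a) = 0 := by
  obtain ⟨i, j, hij, hle⟩ : ∃ i j, P.sim i j ∧ Finsupp.single i 1 + Finsupp.single j 1 ≤ u := by
    simpa [mem_reducedExponents] using hu
  rw [← add_tsub_cancel_of_le hle, add_assoc, monomial_single_add, monomial_single_add,
    pow_one, pow_one, ← mul_assoc, map_mul, P.ofPoly_X_mul_X hij, zero_mul]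

theorem prod_gen (s : Finset P.ι) :
    ∏ i ∈ s, P.gen i = P.ofPoly (monomial s.exponent 1) := by
  rw [← s.prod_X_eq_monomial_exponent, map_prod]
  rfl

open scoped Classical in
noncomputable def coeffs (p : MvPolynomial P.ι ℕ) (s : Finset P.ι) : ℕ :=
  if P.IsIndependent s then coeff s.exponent p else 0

theorem coeffs_add (p q : MvPolynomial P.ι ℕ) : P.coeffs (p + q) = P.coeffs p + P.coeffs q := by
  ext s
  simp only [coeffs, coeff_add, Pi.add_apply]
  split_ifs <;> rfl

theorem coeffs_eq_of_ofPoly_eq {p q : MvPolynomial P.ι ℕ} (h : P.ofPoly p = P.ofPoly q) :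
    P.coeffs p = P.coeffs q := by
  have hpq := P.con_le_coeffCon ((RingCon.eq _).mp h)
  ext s
  unfold coeffs
  split_ifs with hs
  exacts [hpq _ ((P.exponent_mem_reducedExponents_iff s).mpr hs), rfl]

theorem coeffs_sum_monomial_exponent {c : Finset P.ι → ℕ}
    (hc : ∀ s, ¬ P.IsIndependent s → c s = 0) :
    P.coeffs (∑ s, monomial s.exponent (c s)) = c := by
  classical
  ext t
  simp only [coeffs, coeff_sum, coeff_monomial, Finset.exponent_injective.eq_iff,
    Finset.sum_ite_eq', Finset.mem_univ, if_true]
  split_ifs with ht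
  exacts [rfl, (hc t ht).symm]

theorem ofPoly_sum_monomial_exponent (c : Finset P.ι → ℕ) :
    P.ofPoly (∑ s, monomial s.exponent (c s)) = ∑ s, c s • ∏ i ∈ s, P.gen i := by
  simp only [map_sum, prod_gen, ← map_nsmul, smul_monomial, smul_eq_mul, mul_one]

theorem coeffs_monomial_of_notMem {u : P.ι →₀ ℕ} (hu : u ∉ P.reducedExponents) (a : ℕ) :
    P.coeffs (monomial u a) = 0 := by
  classical
  ext s
  simp only [coeffs, Pi.zero_apply]
  split_ifs with hs
  · rw [coeff_monomial, if_neg]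
    rintro rfl
    exact hu ((P.exponent_mem_reducedExponents_iff s).mpr hs)
  · rfl

theorem ofPoly_eq_sum_coeffs (p : MvPolynomial P.ι ℕ) :
    P.ofPoly p = ∑ s, P.coeffs p s • ∏ i ∈ s, P.gen i := by
  classical
  induction p using MvPolynomial.induction_on' with
  | monomial u a =>
    by_cases hu : u ∈ P.reducedExponents
    · obtain ⟨s, rfl⟩ := P.exists_exponent_eq_of_mem_reducedExponents hu
      have hs := (P.exponent_mem_reducedExponents_iff s).mp hu
      have hsum : monomial s.exponent a = ∑ t, monomial t.exponent (Pi.single s a t) := by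
        rw [Finset.sum_eq_single s (fun t _ ht => by rw [Pi.single_eq_of_ne ht, map_zero])
          (by simp), Pi.single_eq_same]
      have hc (t : Finset P.ι) (ht : ¬ P.IsIndependent t) :
          (Pi.single s a : Finset P.ι → ℕ) t = 0 :=
        Pi.single_eq_of_ne (fun h : t = s => ht (h ▸ hs)) _
      rw [hsum, P.coeffs_sum_monomial_exponent hc, P.ofPoly_sum_monomial_exponent]
    · simp [P.ofPoly_monomial_of_notMem hu, P.coeffs_monomial_of_notMem hu]
  | add p q hp hq =>
    simp only [map_add, hp, hq, coeffs_add, Pi.add_apply, add_smul, Finset.sum_add_distrib]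

end WeilPres

/-- As a commutative monoid under addition, a Weil-algebra is free on its nonzero
monomials: every element is a unique ℕ-linear combination of the square-free monomials
`∏_{i ∈ s} xᵢ` indexed by sets `s` of generators containing no two distinct `∼`-related
indices. -/
theorem weil_additive_basis_of_monomials (P : WeilPres) (z : P.Carrier) :
    ∃! c : Finset P.ι → ℕ,
      (∀ s : Finset P.ι, ¬ (∀ i ∈ s, ∀ j ∈ s, i ≠ j → ¬ P.sim i j) → c s = 0) ∧
      z = ∑ s : Finset P.ι, c s • (∏ i ∈ s, P.gen i) := by
  obtain ⟨p, rfl⟩ := P.ofPoly_surjective z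
  refine ⟨P.coeffs p, ⟨fun s hs => if_neg hs, P.ofPoly_eq_sum_coeffs p⟩, ?_⟩
  rintro c ⟨hc, hp⟩
  rw [← P.ofPoly_sum_monomial_exponent] at hp
  rw [P.coeffs_eq_of_ofPoly_eq hp, P.coeffs_sum_monomial_exponent hc]
end

section
/- In the category Weil, the object Wⁿ := ℕ[x₁,…,xₙ]/(xᵢxⱼ : 1 ≤ i,j ≤ n) (all pairwise products of generators zero), together with the n projections Wⁿ → W = ℕ[x]/(x²) sending x_k ↦ x and xᵢ ↦ 0 for i ≠ k, is the categorical product of n copies of W. -/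
open MvPolynomial

/-- Tensor product (coproduct) of Weil presentations: concatenation of generators. -/
def WeilPres.tensor (P Q : WeilPres) : WeilPres where
  ι := P.ι ⊕ Q.ι
  fintypeI := inferInstance
  sim := Sum.LiftRel P.sim Q.sim
  refl i := by cases i with
    | inl a => exact Sum.LiftRel.inl (P.refl a)
    | inr a => exact Sum.LiftRel.inr (Q.refl a)
  symm i j h := by cases h with
    | inl h => exact Sum.LiftRel.inl (P.symm _ _ h)
    | inr h => exact Sum.LiftRel.inr (Q.symm _ _ h)

/-- `Wⁿ = ℕ[x₁,…,xₙ]/(xᵢxⱼ)`: all pairwise products of generators vanish. -/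
def WnPres (n : ℕ) : WeilPres where
  ι := Fin n
  fintypeI := inferInstance
  sim _ _ := True
  refl _ := trivial
  symm _ _ _ := trivial

/-- `ℕ` itself, as the Weil-algebra with no generators. -/
def NPres : WeilPres where
  ι := Empty
  fintypeI := inferInstance
  sim _ _ := True
  refl _ := trivial
  symm _ _ _ := trivial


/-! `Wⁿ` is the trivial square-zero extension `ℕ ⊕ ℕⁿ` and `W` is the dual numbers `ℕ ⊕ ℕε`,
the `k`-th projection being induced by the `k`-th coordinate `ℕⁿ → ℕ`. A semiring map into a
square-zero extension `ℕ ⊕ M` is a map to `ℕ` together with a compatible `M`-component. Since the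
generators of a Weil-algebra are nilpotent, a Weil-algebra has exactly one semiring map to `ℕ`;
so the `ℕ`-parts of any family of maps into `W` agree, and their `ε`-coefficients assemble
uniquely into a map to `ℕ ⊕ ℕⁿ`. -/

open TrivSqZeroExt

namespace WeilPres

variable (P : WeilPres)

noncomputable def lift {S : Type*} [Semiring S] (f : MvPolynomial P.ι ℕ →+* S)
    (hf : ∀ i j, P.sim i j → f (X i) * f (X j) = 0) : P.Carrier →+* S :=
  RingCon.lift _ f <| RingCon.ringConGen_le.2 fun _ _ ⟨i, j, hij, hp, hq⟩ => by
    simp [RingCon.ker_apply, hp, hq, hf i j hij]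

@[simp]
theorem lift_gen {S : Type*} [Semiring S] (f : MvPolynomial P.ι ℕ →+* S)
    (hf : ∀ i j, P.sim i j → f (X i) * f (X j) = 0) (i : P.ι) :
    P.lift f hf (P.gen i) = f (X i) :=
  rfl

theorem gen_mul_gen {i j : P.ι} (h : P.sim i j) : P.gen i * P.gen j = 0 :=
  (RingCon.eq _).2 <| RingConGen.Rel.of _ _ ⟨i, j, h, rfl, rfl⟩

theorem isNilpotent_gen (i : P.ι) : IsNilpotent (P.gen i) :=
  ⟨2, by rw [sq, P.gen_mul_gen (P.refl i)]⟩

theorem ringHom_ext {S : Type*} [Semiring S] {g₁ g₂ : P.Carrier →+* S}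
    (h : ∀ i, g₁ (P.gen i) = g₂ (P.gen i)) : g₁ = g₂ :=
  RingCon.Quotient.hom_ext <| MvPolynomial.ringHom_ext' (Subsingleton.elim _ _) h

noncomputable instance {S : Type*} [Semiring S] [IsReduced S] : Unique (P.Carrier →+* S) where
  default := P.lift ((Nat.castRingHom S).comp MvPolynomial.constantCoeff) fun _ _ _ => by simp
  uniq g := P.ringHom_ext fun i => by simp [((P.isNilpotent_gen i).map g).eq_zero]

end WeilPres

def RingEquiv.ringHomCongrRightEquiv {R S₁ S₂ : Type*} [NonAssocSemiring R]
    [NonAssocSemiring S₁] [NonAssocSemiring S₂] (e : S₁ ≃+* S₂) : (R →+* S₁) ≃ (R →+* S₂) where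
  toFun := e.toRingHom.comp
  invFun := e.symm.toRingHom.comp
  left_inv f := by ext; simp
  right_inv f := by ext; simp

namespace TrivSqZeroExt

section

variable {R : Type*} [CommSemiring R] {M N : Type*}
  [AddCommMonoid M] [Module R M] [Module Rᵐᵒᵖ M] [IsCentralScalar R M]
  [AddCommMonoid N] [Module R N] [Module Rᵐᵒᵖ N] [IsCentralScalar R N]

noncomputable def mapEquiv (e : M ≃ₗ[R] N) : TrivSqZeroExt R M ≃ₐ[R] TrivSqZeroExt R N :=
  AlgEquiv.ofAlgHom (map e) (map e.symm)
    (by rw [← map_comp_map, e.comp_symm, map_id]) (by rw [← map_comp_map, e.symm_comp, map_id])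

@[simp]
theorem mapEquiv_apply (e : M ≃ₗ[R] N) (x : TrivSqZeroExt R M) : mapEquiv e x = map e x := rfl

theorem fst_apply_eq_default {A : Type*} [Semiring A] [Unique (A →+* R)]
    (h : A →+* TrivSqZeroExt R M) (a : A) : fst (h a) = (default : A →+* R) a :=
  RingHom.congr_fun (Unique.eq_default ((fstHom R R M).toRingHom.comp h)) a

end

section

variable {R : Type*} [CommSemiring R] {ι : Type*} {M : ι → Type*}
  [∀ k, AddCommMonoid (M k)] [∀ k, Module R (M k)] [∀ k, Module Rᵐᵒᵖ (M k)]
  [∀ k, IsCentralScalar R (M k)] {A : Type*} [Semiring A]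

noncomputable def piLift (ε : A →+* R) (g : ∀ k, A →+* TrivSqZeroExt R (M k))
    (hg : ∀ k a, fst (g k a) = ε a) : A →+* TrivSqZeroExt R (∀ k, M k) where
  toFun a := inl (ε a) + inr fun k => snd (g k a)
  map_one' := by ext <;> simp
  map_zero' := by ext <;> simp
  map_add' a b := by ext <;> simp [add_add_add_comm]
  map_mul' a b := by ext <;> simp [hg]

theorem map_proj_comp_piLift (ε : A →+* R) (g : ∀ k, A →+* TrivSqZeroExt R (M k))
    (hg : ∀ k a, fst (g k a) = ε a) (k : ι) :
    (map (LinearMap.proj k)).toRingHom.comp (piLift ε g hg) = g k := by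
  ext a : 1
  refine TrivSqZeroExt.ext ?_ ?_ <;> simp [piLift, hg]

theorem ringHom_ext_of_map_proj {h₁ h₂ : A →+* TrivSqZeroExt R (∀ k, M k)}
    (hfst : ∀ a, fst (h₁ a) = fst (h₂ a))
    (hproj : ∀ k, (map (LinearMap.proj k)).toRingHom.comp h₁ =
      (map (LinearMap.proj k)).toRingHom.comp h₂) :
    h₁ = h₂ := by
  ext a : 1
  refine TrivSqZeroExt.ext (hfst a) (funext fun k => ?_)
  simpa using congr_arg snd (RingHom.congr_fun (hproj k) a)

theorem existsUnique_map_proj_comp [Unique (A →+* R)] (g : ∀ k, A →+* TrivSqZeroExt R (M k)) :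
    ∃! h : A →+* TrivSqZeroExt R (∀ k, M k),
      ∀ k, (map (LinearMap.proj k)).toRingHom.comp h = g k :=
  ⟨piLift default g fun k => fst_apply_eq_default (g k), map_proj_comp_piLift _ _ _,
    fun _ hh => ringHom_ext_of_map_proj (by simp [fst_apply_eq_default])
      fun k => by rw [hh, map_proj_comp_piLift]⟩

end

end TrivSqZeroExt

theorem wnPres_gen_mul_gen (n : ℕ) (i j : Fin n) : (WnPres n).gen i * (WnPres n).gen j = 0 :=
  (WnPres n).gen_mul_gen trivial

noncomputable def wnToTrivSqZeroExt (n : ℕ) : (WnPres n).Carrier →+* TrivSqZeroExt ℕ (Fin n → ℕ) :=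
  (WnPres n).lift (eval₂Hom (Nat.castRingHom _) fun i => inr (Pi.single i 1))
    fun _ _ _ => by simp [inr_mul_inr]

theorem wnToTrivSqZeroExt_gen (n : ℕ) (i : Fin n) :
    wnToTrivSqZeroExt n ((WnPres n).gen i) = inr (Pi.single i 1) :=
  ((WnPres n).lift_gen _ _ i).trans (eval₂Hom_X' _ _ _)

noncomputable def trivSqZeroExtToWn (n : ℕ) :
    TrivSqZeroExt ℕ (Fin n → ℕ) →ₐ[ℕ] (WnPres n).Carrier :=
  liftEquivOfComm ⟨Fintype.linearCombination ℕ fun i : Fin n => (WnPres n).gen i, fun x y => by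
    simp only [Fintype.linearCombination_apply, Finset.sum_mul_sum, smul_mul_smul_comm,
      wnPres_gen_mul_gen, smul_zero, Finset.sum_const_zero]⟩

theorem trivSqZeroExtToWn_inr (n : ℕ) (x : Fin n → ℕ) :
    trivSqZeroExtToWn n (inr x) =
      Fintype.linearCombination ℕ (fun i : Fin n => (WnPres n).gen i) x := by
  simp [trivSqZeroExtToWn]

theorem wnToTrivSqZeroExt_trivSqZeroExtToWn (n : ℕ) (x : TrivSqZeroExt ℕ (Fin n → ℕ)) :
    wnToTrivSqZeroExt n (trivSqZeroExtToWn n x) = x := by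
  suffices (wnToTrivSqZeroExt n).toNatAlgHom.comp (trivSqZeroExtToWn n) = AlgHom.id ℕ _ from
    AlgHom.congr_fun this x
  refine algHom_ext fun m => ?_
  simp only [AlgHom.comp_apply, trivSqZeroExtToWn_inr, Fintype.linearCombination_apply,
    RingHom.toNatAlgHom_apply, map_sum, map_nsmul, wnToTrivSqZeroExt_gen, ← inr_smul, ← inr_sum,
    ← pi_eq_sum_univ']
  rfl

theorem trivSqZeroExtToWn_wnToTrivSqZeroExt (n : ℕ) (x : (WnPres n).Carrier) :
    trivSqZeroExtToWn n (wnToTrivSqZeroExt n x) = x := by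
  suffices (trivSqZeroExtToWn n).toRingHom.comp (wnToTrivSqZeroExt n) = RingHom.id _ from
    RingHom.congr_fun this x
  exact (WnPres n).ringHom_ext fun (i : Fin n) => by
    simp [wnToTrivSqZeroExt_gen, trivSqZeroExtToWn_inr]

noncomputable def wnEquivTrivSqZeroExt (n : ℕ) :
    (WnPres n).Carrier ≃+* TrivSqZeroExt ℕ (Fin n → ℕ) :=
  { wnToTrivSqZeroExt n with
    invFun := trivSqZeroExtToWn n
    left_inv := trivSqZeroExtToWn_wnToTrivSqZeroExt n
    right_inv := wnToTrivSqZeroExt_trivSqZeroExtToWn n }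

@[simp]
theorem wnEquivTrivSqZeroExt_gen (n : ℕ) (i : Fin n) :
    wnEquivTrivSqZeroExt n ((WnPres n).gen i) = inr (Pi.single i 1) :=
  wnToTrivSqZeroExt_gen n i

noncomputable def wEquivDualNumber : (WnPres 1).Carrier ≃+* DualNumber ℕ :=
  (wnEquivTrivSqZeroExt 1).trans (mapEquiv (LinearEquiv.funUnique (Fin 1) ℕ ℕ)).toRingEquiv

theorem wEquivDualNumber_gen : wEquivDualNumber ((WnPres 1).gen (0 : Fin 1)) = DualNumber.eps := by
  simp [wEquivDualNumber]

noncomputable def wnProj (n : ℕ) (k : Fin n) : (WnPres n).Carrier →+* (WnPres 1).Carrier :=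
  wEquivDualNumber.symm.toRingHom.comp
    ((TrivSqZeroExt.map (LinearMap.proj k)).toRingHom.comp (wnEquivTrivSqZeroExt n).toRingHom)

theorem wnProj_gen (n : ℕ) (k i : Fin n) :
    wnProj n k ((WnPres n).gen i) = if i = k then (WnPres 1).gen (0 : Fin 1) else 0 := by
  rw [wnProj, RingHom.comp_apply, RingEquiv.toRingHom_eq_coe, RingHom.coe_coe,
    RingEquiv.symm_apply_eq]
  split_ifs with h <;> simp [h, wEquivDualNumber_gen]

theorem wnProj_comp_eq_iff {A : Type*} [Semiring A] (n : ℕ) (k : Fin n)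
    (h : A →+* (WnPres n).Carrier) (f : A →+* (WnPres 1).Carrier) :
    (wnProj n k).comp h = f ↔
      (TrivSqZeroExt.map (LinearMap.proj k)).toRingHom.comp
          ((wnEquivTrivSqZeroExt n).toRingHom.comp h) =
        wEquivDualNumber.toRingHom.comp f := by
  simp only [RingHom.ext_iff, wnProj, RingHom.comp_apply, RingEquiv.toRingHom_eq_coe,
    RingHom.coe_coe, RingEquiv.symm_apply_eq]

/-- `Wⁿ = ℕ[x₁,…,xₙ]/(xᵢxⱼ)`, together with the `n` projections to `W = ℕ[x]/(x²)`
(sending `x_k ↦ x` and the other generators to `0`), is the product of `n` copies of `W`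
in the category `Weil`. -/
theorem wn_is_product (n : ℕ) :
    ∃ π : Fin n → ((WnPres n).Carrier →+* (WnPres 1).Carrier),
      (∀ k i : Fin n, π k ((WnPres n).gen i) = if i = k then (WnPres 1).gen (0 : Fin 1) else 0) ∧
      ∀ (Q : WeilPres) (f : Fin n → (Q.Carrier →+* (WnPres 1).Carrier)),
        ∃! h : Q.Carrier →+* (WnPres n).Carrier, ∀ k, (π k).comp h = f k := by
  refine ⟨wnProj n, wnProj_gen n, fun Q f => ?_⟩
  refine ((wnEquivTrivSqZeroExt n).ringHomCongrRightEquiv.existsUnique_congr fun h => ?_).2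
    (existsUnique_map_proj_comp fun k => wEquivDualNumber.toRingHom.comp (f k))
  exact forall_congr' fun k => wnProj_comp_eq_iff n k h (f k)
end

section
/- Let C be a category with finite products and terminal object ⋆, let D be an object of C and ζ : ⋆ → D any morphism. Then the square with corners D³, D⁴, D, D², with top map ⟨π₁, π₂, ζ∘!, π₃⟩ : D³ → D⁴, left map π₃ : D³ → D, right map ⟨π₃, π₄⟩ : D⁴ → D², and bottom map ⟨ζ∘!, id⟩ : D → D² (where ! denotes the unique map to the terminal object and πᵢ the product projections), is a pullback square in C. -/
open CategoryTheory CategoryTheory.Limits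

/-! The top map is `𝟙 × 𝟙 × ⟨ζ ∘ !, 𝟙⟩` and the vertical maps project away the first two
factors, so the square is the vertical pasting of two squares `X × A ⟶ X × B` over `f : A ⟶ B`,
each of which is a pullback whatever `f` is. -/

namespace CategoryTheory.IsPullback

variable {C : Type*} [Category C] [HasBinaryProducts C]

lemma of_prod_snd_with_id {A B : C} (f : A ⟶ B) (X : C) :
    IsPullback (prod.map (𝟙 X) f) prod.snd prod.snd f where
  isLimit' := ⟨PullbackCone.IsLimit.mk _ (fun s ↦ prod.lift (s.fst ≫ prod.fst) s.snd)
    (fun s ↦ by ext <;> simp [prod.lift_fst, prod.lift_snd, PullbackCone.condition])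
    (fun s ↦ prod.lift_snd _ _)
    (fun s m h₁ h₂ ↦ by ext <;> simp [prod.lift_fst, prod.lift_snd, ← h₁, ← h₂])⟩

lemma of_prod_snd_snd_with_id {A B : C} (f : A ⟶ B) (X Y : C) :
    IsPullback (prod.map (𝟙 X) (prod.map (𝟙 Y) f)) (prod.snd ≫ prod.snd) (prod.snd ≫ prod.snd)
      f :=
  (of_prod_snd_with_id (prod.map (𝟙 Y) f) X).paste_vert (of_prod_snd_with_id f Y)

end CategoryTheory.IsPullback

/-- Let `C` be a category with finite products, `D` an object and `ζ : ⋆ → D` any morphism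
from the terminal object. Then the square with corners `D³`, `D⁴`, `D`, `D²`, with top map
`⟨π₁, π₂, ζ∘!, π₃⟩ : D³ → D⁴`, left map `π₃ : D³ → D`, right map `⟨π₃, π₄⟩ : D⁴ → D²` and
bottom map `⟨ζ∘!, id⟩ : D → D²`, is a pullback square in `C`. -/
theorem pullback_of_pointed_power_square {C : Type*} [Category C] [HasFiniteProducts C]
    (D : C) (ζ : ⊤_ C ⟶ D) :
    IsPullback
      (prod.lift prod.fst
        (prod.lift (prod.snd ≫ prod.fst)
          (prod.lift (terminal.from (D ⨯ (D ⨯ D)) ≫ ζ) (prod.snd ≫ prod.snd))) :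
        D ⨯ (D ⨯ D) ⟶ D ⨯ (D ⨯ (D ⨯ D)))
      (prod.snd ≫ prod.snd : D ⨯ (D ⨯ D) ⟶ D)
      (prod.lift (prod.snd ≫ prod.snd ≫ prod.fst) (prod.snd ≫ prod.snd ≫ prod.snd) :
        D ⨯ (D ⨯ (D ⨯ D)) ⟶ D ⨯ D)
      (prod.lift (terminal.from D ≫ ζ) (𝟙 D) : D ⟶ D ⨯ D) := by
  convert IsPullback.of_prod_snd_snd_with_id (prod.lift (terminal.from D ≫ ζ) (𝟙 D)) D D
    using 1 <;> ext <;> simp [prod.lift_fst, prod.lift_snd]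
end

section
/- Let φ₁ : A → A' and φ₂ : A' → A'' be morphisms of Weil-algebras, and for a generator xᵢ of A write (φ₂φ₁)(xᵢ) and φ₂(φ₁(xᵢ)) each as an ℕ-linear combination of monomials in the generators of A'' obtained by formally expanding without simplification. Then the multiset of monomials occurring in the formal expansion of φ₂(φ₁(xᵢ)) (expanding φ₁(xᵢ) into monomials in A' and then substituting the monomial expansions of φ₂ on each generator and distributing) equals the multiset of monomials of (φ₂φ₁)(xᵢ) together with a multiset of monomials each of which contains a factor z_j z_k with j ∼'' k (and hence is zero in A''). -/
open MvPolynomial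

/-- Formal substitution: given an expansion `E y` of the image of each generator `y` as a
list of monomials (multisets of generators), substitute into a single monomial (a list of
generators) and distribute, producing the list of monomials of the formal expansion. -/
def substMon {β γ : Type} (E : β → List (Multiset γ)) : List β → List (Multiset γ)
  | [] => [0]
  | y :: m => (E y).flatMap fun t => (substMon E m).map fun u => t + u

/-- Formal substitution of monomial expansions into a formal sum of monomials. -/
def substExp {β γ : Type} (E : β → List (Multiset γ)) (e : List (List β)) :
    List (Multiset γ) :=
  e.flatMap (substMon E)

/-- A monomial `t` (a multiset of generators of `A''`) contains a factor `z_j z_k` with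
`j ∼'' k`. -/
def containsRelPair (P'' : WeilPres) (t : Multiset P''.ι) : Prop :=
  ∃ j k, P''.sim j k ∧ ({j, k} : Multiset P''.ι) ≤ t

/-! ### Auxiliary machinery -/

section Proj

variable {σ : Type} (bad : Multiset σ → Prop) [DecidablePred bad]

/-- The linear projection of `ℕ[zⱼ]` onto the span of the "good" monomials, killing every
monomial whose exponent multiset is `bad`. -/
noncomputable def weilProj (p : MvPolynomial σ ℕ) : MvPolynomial σ ℕ :=
  ∑ d ∈ p.support, if bad d.toMultiset then 0 else monomial d (coeff d p)

lemma coeff_weilProj (p : MvPolynomial σ ℕ) (e : σ →₀ ℕ) :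
    coeff e (weilProj bad p) = if bad e.toMultiset then 0 else coeff e p := by
  classical
  rw [weilProj, coeff_sum, Finset.sum_eq_single e]
  · split
    · simp
    · simp [coeff_monomial]
  · intro d _ hne
    split
    · simp
    · simp [coeff_monomial, hne]
  · intro he
    rw [notMem_support_iff.mp he]
    simp

lemma weilProj_zero : weilProj bad (0 : MvPolynomial σ ℕ) = 0 := by
  ext e; rw [coeff_weilProj]; split <;> simp

lemma weilProj_add (p q : MvPolynomial σ ℕ) :
    weilProj bad (p + q) = weilProj bad p + weilProj bad q := by
  ext e; rw [coeff_add, coeff_weilProj, coeff_weilProj, coeff_weilProj, coeff_add]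
  split <;> simp

lemma weilProj_monomial_bad {d : σ →₀ ℕ} (hd : bad d.toMultiset) (c : ℕ) :
    weilProj bad (monomial d c) = 0 := by
  classical
  ext e
  rw [coeff_weilProj]
  split
  · simp
  next he =>
    rw [coeff_monomial, coeff_zero, if_neg]
    rintro rfl
    exact he hd

variable (hb : ∀ s t : Multiset σ, bad s → s ≤ t → bad t)

include hb in
lemma weilProj_mul (p q : MvPolynomial σ ℕ) :
    weilProj bad (p * q) = weilProj bad (weilProj bad p * weilProj bad q) := by
  classical
  ext e
  rw [coeff_weilProj, coeff_weilProj]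
  split
  · rfl
  next he =>
    rw [coeff_mul, coeff_mul]
    refine Finset.sum_congr rfl fun x hx => ?_
    have hsum : x.1 + x.2 = e := Finset.HasAntidiagonal.mem_antidiagonal.mp hx
    have h1 : ¬ bad x.1.toMultiset := fun h => he <| by
      refine hb _ _ h ?_
      rw [← hsum, Finsupp.toMultiset_add]
      exact Multiset.le_add_right _ _
    have h2 : ¬ bad x.2.toMultiset := fun h => he <| by
      refine hb _ _ h ?_
      rw [← hsum, Finsupp.toMultiset_add]
      exact Multiset.le_add_left _ _
    rw [coeff_weilProj, if_neg h1, coeff_weilProj, if_neg h2]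

include hb in
/-- The projection is invariant under the ring congruence generated by any relation whose
pairs it identifies. -/
lemma weilProj_rel (r : MvPolynomial σ ℕ → MvPolynomial σ ℕ → Prop)
    (hr : ∀ p q, r p q → weilProj bad p = weilProj bad q) :
    ∀ p q, RingConGen.Rel r p q → weilProj bad p = weilProj bad q := by
  intro p q h
  induction h with
  | of p q h => exact hr p q h
  | refl _ => rfl
  | symm _ ih => exact ih.symm
  | trans _ _ ih1 ih2 => exact ih1.trans ih2
  | add _ _ ih1 ih2 => rw [weilProj_add, weilProj_add, ih1, ih2]
  | mul _ _ ih1 ih2 => rw [weilProj_mul bad hb, ih1, ih2, ← weilProj_mul bad hb]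

end Proj

lemma substMon_prod_sum {β γ : Type} {S : Type*} [CommSemiring S]
    (E : β → List (Multiset γ)) (g : γ → S) :
    ∀ l : List β,
      ((substMon E l).map fun t => (Multiset.map g t).prod).sum
        = (l.map fun y => ((E y).map fun t => (Multiset.map g t).prod).sum).prod := by
  intro l
  induction l with
  | nil => simp [substMon]
  | cons y l ih =>
    rw [substMon, List.map_cons, List.prod_cons, ← ih]
    rw [List.map_flatMap, List.flatMap_def, List.sum_flatten, List.map_map]
    rw [← List.sum_map_mul_right]
    refine congrArg List.sum (List.map_congr_left fun t _ => ?_)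
    simp only [Function.comp_apply, List.map_map]
    rw [← List.sum_map_mul_left]
    refine congrArg List.sum (List.map_congr_left fun u _ => ?_)
    simp [Multiset.prod_add]

lemma monX_eq {σ : Type} [DecidableEq σ] (t : Multiset σ) :
    (Multiset.map (X : σ → MvPolynomial σ ℕ) t).prod = monomial (Multiset.toFinsupp t) 1 := by
  induction t using Multiset.induction_on with
  | empty => simp
  | cons a t ih =>
    rw [Multiset.map_cons, Multiset.prod_cons, ih, X, monomial_mul, one_mul]
    have : a ::ₘ t = ({a} : Multiset σ) + t := by
      rw [Multiset.singleton_add]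
    rw [this, Multiset.toFinsupp_add, Multiset.toFinsupp_singleton]

lemma coeff_sum_monX {σ : Type} [DecidableEq σ] (L : List (Multiset σ)) (d : σ →₀ ℕ) :
    coeff d ((L.map fun t => monomial (Multiset.toFinsupp t) (1:ℕ)).sum)
      = Multiset.count d.toMultiset (↑L : Multiset (Multiset σ)) := by
  induction L with
  | nil => simp
  | cons t L ih =>
    rw [List.map_cons, List.sum_cons, coeff_add, ih, coeff_monomial, ← Multiset.cons_coe,
      Multiset.count_cons]
    have : Multiset.toFinsupp t = d ↔ t = Finsupp.toMultiset d := by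
      constructor
      · rintro rfl; rw [Multiset.toFinsupp_toMultiset]
      · rintro rfl; rw [Finsupp.toMultiset_toFinsupp]
    rw [add_comm]
    congr 1
    simp only [this]
    split <;> simp_all [eq_comm]

/-- Let `φ₁ : A → A'`, `φ₂ : A' → A''` be morphisms of Weil-algebras, and let `E₁`, `E₂`,
`E₁₂` be the canonical expansions (into nonzero monomials) of the images of the generators
under `φ₁`, `φ₂` and `φ₂ ∘ φ₁`. Then for each generator `xᵢ` of `A`, the multiset of
monomials obtained by formally expanding `φ₂(φ₁(xᵢ))` (substituting the expansions of
`φ₂` into the monomials of `E₁ i` and distributing, without simplification) equals the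
multiset of monomials of `(φ₂φ₁)(xᵢ)` together with a multiset of monomials each of which
contains a factor `z_j z_k` with `j ∼'' k` (hence is zero in `A''`). -/
theorem formal_composition_expansion (P P' P'' : WeilPres)
    (φ₁ : P.Carrier →+* P'.Carrier) (φ₂ : P'.Carrier →+* P''.Carrier)
    (E₁ : P.ι → List (List P'.ι))
    (E₂ : P'.ι → List (Multiset P''.ι))
    (E₁₂ : P.ι → List (Multiset P''.ι))
    (hφ₁ : ∀ i, φ₁ (P.gen i) = ((E₁ i).map fun l => (l.map P'.gen).prod).sum)
    (hφ₂ : ∀ y, φ₂ (P'.gen y) = ((E₂ y).map fun t => (t.map P''.gen).prod).sum)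
    (hφ₁₂ : ∀ i, φ₂ (φ₁ (P.gen i)) = ((E₁₂ i).map fun t => (t.map P''.gen).prod).sum)
    (hE₁ : ∀ i, ∀ l ∈ E₁ i, ¬ ∃ j k, P'.sim j k ∧ ({j, k} : Multiset P'.ι) ≤ ↑l)
    (hE₂ : ∀ y, ∀ t ∈ E₂ y, ¬ containsRelPair P'' t)
    (hE₁₂ : ∀ i, ∀ t ∈ E₁₂ i, ¬ containsRelPair P'' t) :
    ∀ i, ∃ Z : List (Multiset P''.ι),
      (∀ t ∈ Z, containsRelPair P'' t) ∧
      (↑(substExp E₂ (E₁ i)) : Multiset (Multiset P''.ι)) = ↑(E₁₂ i) + ↑Z := by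
  classical
  intro i
  set bad : Multiset P''.ι → Prop := containsRelPair P'' with hbad
  have hb : ∀ s t : Multiset P''.ι, bad s → s ≤ t → bad t := by
    rintro s t ⟨j, k, hjk, hle⟩ hst
    exact ⟨j, k, hjk, hle.trans hst⟩
  set r : MvPolynomial P''.ι ℕ → MvPolynomial P''.ι ℕ → Prop :=
    fun p q => ∃ j k, P''.sim j k ∧ p = X j * X k ∧ q = 0 with hr
  -- products of generators are classes of monomials
  have hgen : ∀ t : Multiset P''.ι, (Multiset.map P''.gen t).prod
      = RingCon.mk' _ (monomial (Multiset.toFinsupp t) (1:ℕ)) := by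
    intro t
    rw [← monX_eq, map_multiset_prod, Multiset.map_map]
    rfl
  set monP : Multiset P''.ι → MvPolynomial P''.ι ℕ :=
    fun t => monomial (Multiset.toFinsupp t) (1:ℕ) with hmonP
  set L : List (Multiset P''.ι) := substExp E₂ (E₁ i) with hL
  set q₁ : MvPolynomial P''.ι ℕ := (L.map monP).sum with hq₁
  set q₂ : MvPolynomial P''.ι ℕ := ((E₁₂ i).map monP).sum with hq₂
  -- the mk' of a list-of-monomials sum
  have hmk : ∀ M : List (Multiset P''.ι),
      (RingCon.mk' _ ((M.map monP).sum) : P''.Carrier)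
        = (M.map fun t => (Multiset.map P''.gen t).prod).sum := by
    intro M
    rw [map_list_sum, List.map_map]
    refine congrArg List.sum (List.map_congr_left fun t _ => ?_)
    rw [Function.comp_apply, hgen t]
  -- key congruence relation between q₁ and q₂
  have key : (RingCon.mk' _ q₁ : P''.Carrier) = RingCon.mk' _ q₂ := by
    rw [hq₁, hq₂, hmk, hmk]
    have h2 : ((E₁₂ i).map fun t => (Multiset.map P''.gen t).prod).sum
        = φ₂ (φ₁ (P.gen i)) := (hφ₁₂ i).symm
    rw [h2, hL]
    show ((((E₁ i).flatMap (substMon E₂)).map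
        fun t => (Multiset.map P''.gen t).prod)).sum = _
    rw [List.map_flatMap, List.flatMap_def, List.sum_flatten, List.map_map]
    have : ∀ l ∈ E₁ i, (List.sum ∘ fun l => ((substMon E₂ l).map
        fun t => (Multiset.map P''.gen t).prod)) l = φ₂ ((l.map P'.gen).prod) := by
      intro l _
      rw [Function.comp_apply, substMon_prod_sum E₂ P''.gen l]
      rw [map_list_prod, List.map_map]
      refine congrArg List.prod (List.map_congr_left fun y _ => ?_)
      exact (hφ₂ y).symm
    rw [List.map_congr_left this, hφ₁ i, map_list_sum, List.map_map]
    rfl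
  -- transfer along the projection
  have hrel : RingConGen.Rel r q₁ q₂ := (RingCon.eq _).mp key
  have hof : ∀ p q, r p q → weilProj bad p = weilProj bad q := by
    rintro p q ⟨j, k, hjk, rfl, rfl⟩
    rw [weilProj_zero]
    rw [X, X, monomial_mul, one_mul]
    refine weilProj_monomial_bad bad ?_ _
    rw [Finsupp.toMultiset_add, Finsupp.toMultiset_single, Finsupp.toMultiset_single]
    refine ⟨j, k, hjk, le_of_eq ?_⟩
    simp [Multiset.insert_eq_cons, Multiset.singleton_add]
  have hproj : weilProj bad q₁ = weilProj bad q₂ :=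
    weilProj_rel bad hb r hof q₁ q₂ hrel
  -- extract counts
  have hcount : ∀ m : Multiset P''.ι, ¬ bad m →
      Multiset.count m (↑L : Multiset (Multiset P''.ι))
        = Multiset.count m (↑(E₁₂ i) : Multiset (Multiset P''.ι)) := by
    intro m hm
    have := congrArg (coeff (Multiset.toFinsupp m)) hproj
    rw [coeff_weilProj, coeff_weilProj, hq₁, hq₂, hmonP, coeff_sum_monX, coeff_sum_monX,
      Multiset.toFinsupp_toMultiset, if_neg hm, if_neg hm] at this
    exact this
  -- split L into good and bad parts
  refine ⟨(Multiset.filter bad (↑L : Multiset (Multiset P''.ι))).toList, ?_, ?_⟩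
  · intro t ht
    rw [Multiset.mem_toList, Multiset.mem_filter] at ht
    exact ht.2
  · rw [Multiset.coe_toList]
    have hgood : Multiset.filter (fun t => ¬ bad t) (↑L : Multiset (Multiset P''.ι))
        = (↑(E₁₂ i) : Multiset (Multiset P''.ι)) := by
      ext m
      rw [Multiset.count_filter]
      split
      next hm => exact hcount m hm
      next hm =>
        rw [not_not] at hm
        symm
        rw [Multiset.count_eq_zero]
        intro hmem
        exact hE₁₂ i m (by exact_mod_cast hmem) hm
    calc (↑L : Multiset (Multiset P''.ι))
        = Multiset.filter (fun t => ¬ bad t) (↑L : Multiset (Multiset P''.ι))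
          + Multiset.filter (fun t => ¬ ¬ bad t) (↑L : Multiset (Multiset P''.ι)) :=
          (Multiset.filter_add_not _ _).symm
      _ = ↑(E₁₂ i) + Multiset.filter bad (↑L : Multiset (Multiset P''.ι)) := by
          rw [hgood, Multiset.filter_congr fun t _ => (not_not (a := bad t))]
end
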